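/- Let a = i(x²−y²), b = −y(y²/3−x²−1) − i(x(1+y²−x²/3)+C−t), U = i(a(|z|²−1) + b̄z̄ − bz)/(|a|²+|b|²), and ψ = (1/(|a|²+|b|²))·(āz − b̄, ā + b̄z̄)ᵀ with z = x+iy. Then at every point where |a|²+|b|² ≠ 0, the vector ψ satisfies the Dirac equation ∂ψ₂ + Uψ₁ = 0 and −∂̄ψ₁ + Uψ₂ = 0 (i.e. Lψ = 0 for L = [[0,∂],[−∂̄,0]] + diag(U,U)). -/

import Mathlib

open Complex

noncomputable def pd1 (f : ℝ → ℝ → ℂ) : ℝ → ℝ → ℂ := fun x y => deriv (fun x' => f x' y) x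
noncomputable def pd2 (f : ℝ → ℝ → ℂ) : ℝ → ℝ → ℂ := fun x y => deriv (fun y' => f x y') y
noncomputable def del (f : ℝ → ℝ → ℂ) : ℝ → ℝ → ℂ :=
  fun x y => (pd1 f x y - Complex.I * pd2 f x y) / 2
noncomputable def delbar (f : ℝ → ℝ → ℂ) : ℝ → ℝ → ℂ :=
  fun x y => (pd1 f x y + Complex.I * pd2 f x y) / 2

/-- z = x + iy -/
noncomputable def zc (x y : ℝ) : ℂ := (x : ℂ) + Complex.I * (y : ℂ)

/-- a = i(x²−y²) -/
noncomputable def aMNV (x y : ℝ) : ℂ := Complex.I * ((x^2 - y^2 : ℝ) : ℂ)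

/-- b = −y(y²/3 − x² − 1) − i(x(1 + y² − x²/3) + C − t) -/
noncomputable def bMNV (C t x y : ℝ) : ℂ :=
  ((-y*(y^2/3 - x^2 - 1) : ℝ) : ℂ) - Complex.I * ((x*(1 + y^2 - x^2/3) + C - t : ℝ) : ℂ)

/-- |a|² + |b|² -/
noncomputable def denomMNV (C t x y : ℝ) : ℝ :=
  (‖aMNV x y‖)^2 + (‖bMNV C t x y‖)^2

/-- U = i(a(|z|²−1) + b̄z̄ − bz)/(|a|²+|b|²) -/
noncomputable def UMNV (C t : ℝ) : ℝ → ℝ → ℂ := fun x y =>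
  Complex.I * (aMNV x y * ((x^2 + y^2 - 1 : ℝ) : ℂ)
      + (starRingEnd ℂ) (bMNV C t x y) * (starRingEnd ℂ) (zc x y)
      - bMNV C t x y * zc x y) / ((denomMNV C t x y : ℝ) : ℂ)

/-- ψ₁ = (āz − b̄)/(|a|²+|b|²) -/
noncomputable def psi1MNV (C t : ℝ) : ℝ → ℝ → ℂ := fun x y =>
  ((starRingEnd ℂ) (aMNV x y) * zc x y - (starRingEnd ℂ) (bMNV C t x y))
    / ((denomMNV C t x y : ℝ) : ℂ)

/-- ψ₂ = (ā + b̄z̄)/(|a|²+|b|²) -/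
noncomputable def psi2MNV (C t : ℝ) : ℝ → ℝ → ℂ := fun x y =>
  ((starRingEnd ℂ) (aMNV x y) + (starRingEnd ℂ) (bMNV C t x y) * (starRingEnd ℂ) (zc x y))
    / ((denomMNV C t x y : ℝ) : ℂ)

/-! In complex coordinates `a = i(z² + z̄²)/2` and `b = i(z̄³/3 − z − (C − t))`, so that
`∂a = iz`, `∂̄a = iz̄`, `∂b = −i`, `∂̄b = iz̄²`. Feeding these Wirtinger derivatives into the
quotient rule, both Dirac equations become, after clearing the denominator `|a|² + |b|²`,
polynomial identities in `a, ā, b, b̄, z, z̄` which hold because `a` is purely imaginary. -/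

open scoped ComplexConjugate

/-- `d` and `d'` play the roles of `∂f` and `∂̄f`, i.e. `f_x = d + d'` and `f_y = i(d − d')`. -/
def HasWirtingerAt (f : ℝ → ℝ → ℂ) (d d' : ℂ) (x y : ℝ) : Prop :=
  HasDerivAt (fun s => f s y) (d + d') x ∧ HasDerivAt (fun s => f x s) (I * (d - d')) y

namespace HasWirtingerAt

variable {f g : ℝ → ℝ → ℂ} {d d' e e' : ℂ} {x y : ℝ}

theorem del_eq (h : HasWirtingerAt f d d' x y) : del f x y = d := by
  simp only [del, pd1, pd2, h.1.deriv, h.2.deriv]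
  linear_combination (d' - d) / 2 * I_sq

theorem delbar_eq (h : HasWirtingerAt f d d' x y) : delbar f x y = d' := by
  simp only [delbar, pd1, pd2, h.1.deriv, h.2.deriv]
  linear_combination (d - d') / 2 * I_sq

theorem congr_deriv (h : HasWirtingerAt f d d' x y) (hd : d = e) (hd' : d' = e') :
    HasWirtingerAt f e e' x y :=
  hd ▸ hd' ▸ h

theorem add (hf : HasWirtingerAt f d d' x y) (hg : HasWirtingerAt g e e' x y) :
    HasWirtingerAt (fun x y => f x y + g x y) (d + e) (d' + e') x y :=
  ⟨(hf.1.add hg.1).congr_deriv (by ring), (hf.2.add hg.2).congr_deriv (by ring)⟩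

theorem sub (hf : HasWirtingerAt f d d' x y) (hg : HasWirtingerAt g e e' x y) :
    HasWirtingerAt (fun x y => f x y - g x y) (d - e) (d' - e') x y :=
  ⟨(hf.1.sub hg.1).congr_deriv (by ring), (hf.2.sub hg.2).congr_deriv (by ring)⟩

theorem mul (hf : HasWirtingerAt f d d' x y) (hg : HasWirtingerAt g e e' x y) :
    HasWirtingerAt (fun x y => f x y * g x y)
      (d * g x y + f x y * e) (d' * g x y + f x y * e') x y :=
  ⟨(hf.1.mul hg.1).congr_deriv (by ring), (hf.2.mul hg.2).congr_deriv (by ring)⟩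

theorem const_mul (c : ℂ) (hf : HasWirtingerAt f d d' x y) :
    HasWirtingerAt (fun x y => c * f x y) (c * d) (c * d') x y :=
  ⟨(hf.1.const_mul c).congr_deriv (by ring), (hf.2.const_mul c).congr_deriv (by ring)⟩

theorem pow (hf : HasWirtingerAt f d d' x y) (n : ℕ) :
    HasWirtingerAt (fun x y => f x y ^ n)
      (n * f x y ^ (n - 1) * d) (n * f x y ^ (n - 1) * d') x y :=
  ⟨(hf.1.fun_pow n).congr_deriv (by ring), (hf.2.fun_pow n).congr_deriv (by ring)⟩

theorem div (hf : HasWirtingerAt f d d' x y) (hg : HasWirtingerAt g e e' x y) (hx : g x y ≠ 0) :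
    HasWirtingerAt (fun x y => f x y / g x y)
      ((d * g x y - f x y * e) / g x y ^ 2) ((d' * g x y - f x y * e') / g x y ^ 2) x y :=
  ⟨(hf.1.div hg.1 hx).congr_deriv (by ring), (hf.2.div hg.2 hx).congr_deriv (by ring)⟩

theorem star (hf : HasWirtingerAt f d d' x y) :
    HasWirtingerAt (fun x y => conj (f x y)) (conj d') (conj d) x y := by
  refine ⟨hf.1.star.congr_deriv ?_, hf.2.star.congr_deriv ?_⟩ <;>
    simp only [Complex.star_def, map_add, map_mul, map_sub, conj_I] <;> ring

end HasWirtingerAt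

theorem hasWirtingerAt_const (c : ℂ) (x y : ℝ) : HasWirtingerAt (fun _ _ => c) 0 0 x y :=
  ⟨(hasDerivAt_const x c).congr_deriv (by ring), (hasDerivAt_const y c).congr_deriv (by ring)⟩

theorem hasWirtingerAt_zc (x y : ℝ) : HasWirtingerAt zc 1 0 x y := by
  refine ⟨?_, ?_⟩
  · simpa [zc] using ((hasDerivAt_id x).ofReal_comp).add_const (I * y)
  · simpa [zc] using (((hasDerivAt_id y).ofReal_comp).const_mul I).const_add (x : ℂ)

section Spinor

variable (a b : ℝ → ℝ → ℂ)

noncomputable def spinorDenom : ℝ → ℝ → ℂ := fun x y =>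
  a x y * conj (a x y) + b x y * conj (b x y)

noncomputable def spinor₁ : ℝ → ℝ → ℂ := fun x y =>
  (conj (a x y) * zc x y - conj (b x y)) / spinorDenom a b x y

noncomputable def spinor₂ : ℝ → ℝ → ℂ := fun x y =>
  (conj (a x y) + conj (b x y) * conj (zc x y)) / spinorDenom a b x y

noncomputable def spinorPotential : ℝ → ℝ → ℂ := fun x y =>
  I * (a x y * (zc x y * conj (zc x y) - 1) + conj (b x y) * conj (zc x y) - b x y * zc x y)
    / spinorDenom a b x y

variable {a b} {x y : ℝ}

theorem dirac_spinor_eq_zero (ha : HasWirtingerAt a (I * zc x y) (I * conj (zc x y)) x y)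
    (hb : HasWirtingerAt b (-I) (I * conj (zc x y) ^ 2) x y) (ha_conj : conj (a x y) = -a x y)
    (hD : spinorDenom a b x y ≠ 0) :
    del (spinor₂ a b) x y + spinorPotential a b x y * spinor₁ a b x y = 0 ∧
    -(delbar (spinor₁ a b) x y) + spinorPotential a b x y * spinor₂ a b x y = 0 := by
  have hz := hasWirtingerAt_zc x y
  have hDw := (ha.mul ha.star).add (hb.mul hb.star)
  have h₁ : HasWirtingerAt (spinor₁ a b) _ _ x y :=
    ((ha.star.mul hz).sub hb.star).div hDw hD
  have h₂ : HasWirtingerAt (spinor₂ a b) _ _ x y :=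
    (ha.star.add (hb.star.mul hz.star)).div hDw hD
  rw [h₂.del_eq, h₁.delbar_eq]
  simp only [spinor₁, spinor₂, spinorPotential, spinorDenom] at hD ⊢
  simp only [map_mul, map_neg, map_zero, map_pow, conj_I, conj_conj, ha_conj] at hD ⊢
  constructor
  · field_simp
    ring
  · field_simp
    ring

end Spinor

theorem aMNV_eq (x y : ℝ) : aMNV x y = I / 2 * (zc x y ^ 2 + conj (zc x y) ^ 2) := by
  simp only [aMNV, zc, map_add, map_mul, conj_ofReal, conj_I]
  push_cast
  linear_combination -I * (y : ℂ) ^ 2 * I_sq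

theorem bMNV_eq (C t x y : ℝ) :
    bMNV C t x y = I / 3 * conj (zc x y) ^ 3 - I * zc x y - I * (C - t) := by
  simp only [bMNV, zc, map_add, map_mul, conj_ofReal, conj_I]
  push_cast
  ring_nf
  simp only [I_sq, I_pow_three, I_pow_four]
  ring

theorem hasWirtingerAt_aMNV (x y : ℝ) :
    HasWirtingerAt aMNV (I * zc x y) (I * conj (zc x y)) x y := by
  have hz := hasWirtingerAt_zc x y
  rw [show aMNV = _ from funext₂ aMNV_eq]
  refine (((hz.pow 2).add (hz.star.pow 2)).const_mul (I / 2)).congr_deriv ?_ ?_ <;>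
    (simp only [Nat.cast_ofNat, Nat.add_one_sub_one, pow_one, mul_one, map_zero, map_one,
      mul_zero, add_zero, zero_add]; ring)

theorem hasWirtingerAt_bMNV (C t x y : ℝ) :
    HasWirtingerAt (bMNV C t) (-I) (I * conj (zc x y) ^ 2) x y := by
  have hz := hasWirtingerAt_zc x y
  rw [show bMNV C t = _ from funext₂ (bMNV_eq C t)]
  refine ((((hz.star.pow 3).const_mul (I / 3)).sub (hz.const_mul I)).sub
    (hasWirtingerAt_const (I * (C - t)) x y)).congr_deriv ?_ ?_
  · simp
  · simp only [Nat.cast_ofNat, Nat.add_one_sub_one, map_one, mul_one, mul_zero, sub_zero]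
    ring

theorem conj_aMNV (x y : ℝ) : conj (aMNV x y) = -aMNV x y := by
  simp [aMNV]

theorem denomMNV_eq (C t x y : ℝ) :
    (denomMNV C t x y : ℂ) = spinorDenom aMNV (bMNV C t) x y := by
  simp only [denomMNV, spinorDenom, mul_conj, Complex.normSq_eq_norm_sq]
  push_cast
  rfl

theorem psi1MNV_eq (C t : ℝ) : psi1MNV C t = spinor₁ aMNV (bMNV C t) := by
  ext x y
  simp only [psi1MNV, spinor₁, denomMNV_eq]

theorem psi2MNV_eq (C t : ℝ) : psi2MNV C t = spinor₂ aMNV (bMNV C t) := by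
  ext x y
  simp only [psi2MNV, spinor₂, denomMNV_eq]

theorem UMNV_eq (C t : ℝ) : UMNV C t = spinorPotential aMNV (bMNV C t) := by
  ext x y
  have hz : zc x y * conj (zc x y) = ((x ^ 2 + y ^ 2 : ℝ) : ℂ) := by
    rw [mul_conj, zc, mul_comm I, normSq_add_mul_I]
  simp only [UMNV, spinorPotential, denomMNV_eq, hz]
  push_cast
  ring

theorem mnv_dirac_zero_level (C t x y : ℝ) (h : denomMNV C t x y ≠ 0) :
    del (psi2MNV C t) x y + UMNV C t x y * psi1MNV C t x y = 0 ∧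
    -(delbar (psi1MNV C t) x y) + UMNV C t x y * psi2MNV C t x y = 0 := by
  rw [psi1MNV_eq, psi2MNV_eq, UMNV_eq]
  refine dirac_spinor_eq_zero (hasWirtingerAt_aMNV x y) (hasWirtingerAt_bMNV C t x y)
    (conj_aMNV x y) ?_
  rw [← denomMNV_eq]
  exact_mod_cast h
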